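/- arXiv:2309.01936 — 4 statements merged into one kernel-verified Lean document; each statement's English description precedes it below -/
import Mathlib

section
/- Let ρ be a positive random variable with continuous strictly increasing CDF F on [0,∞), F(0)=0, E[ρ]<∞, and α∈(0,1). Define ζ(λ) = [∫_{1-F(λ/α)}^1 F^{-1}(1-z) dz] / [α-1+F(λ/α)] for λ ∈ (αF^{-1}(1-α), ∞). Then ζ attains its unique minimum at λ̂, the unique root of η(λ) = -∫_{1-F(λ/α)}^1 F^{-1}(1-y)dy + λ(α-1+F(λ/α))/α, and the minimum value is ζ(λ̂) = λ̂/α. -/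
/-!
Substituting `u = 1 - z` turns both integrals into `H p = ∫₀ᵖ F⁻¹`, taken at `p = F (λ / α)`.
Since `F⁻¹` is strictly increasing, `H` is strictly convex with `H' = F⁻¹`; with `x̂ = λ̂ / α` and
`p̂ = F x̂` this gives `H p > H p̂ + x̂ (p - p̂)` for `p ≠ p̂`. The root condition reads
`H p̂ = x̂ (p̂ - (1 - α))`, so `H p > x̂ (p - (1 - α))`, i.e. `ζ λ > x̂` wherever the denominator
`p - (1 - α)` is positive. At `λ̂` that denominator is positive because `H p̂ > 0`, and then
`ζ λ̂ = x̂`.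
-/

open Set MeasureTheory intervalIntegral

section IntegralBounds

variable {Q : ℝ → ℝ} {a b : ℝ}

lemma MonotoneOn.mul_sub_le_intervalIntegral (hQ : MonotoneOn Q (Icc a b)) (hab : a ≤ b) :
    Q a * (b - a) ≤ ∫ u in a..b, Q u := by
  have hint : IntervalIntegrable Q volume a b := (hQ.mono (uIcc_of_le hab).le).intervalIntegrable
  have := integral_mono_on hab intervalIntegrable_const hint
    fun u hu => hQ (left_mem_Icc.2 hab) hu hu.1
  rwa [intervalIntegral.integral_const, smul_eq_mul, mul_comm] at this

lemma MonotoneOn.intervalIntegral_le_mul_sub (hQ : MonotoneOn Q (Icc a b)) (hab : a ≤ b) :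
    ∫ u in a..b, Q u ≤ Q b * (b - a) := by
  have hint : IntervalIntegrable Q volume a b := (hQ.mono (uIcc_of_le hab).le).intervalIntegrable
  have := integral_mono_on hab hint intervalIntegrable_const
    fun u hu => hQ hu (right_mem_Icc.2 hab) hu.2
  rwa [intervalIntegral.integral_const, smul_eq_mul, mul_comm] at this

lemma StrictMonoOn.mul_sub_lt_intervalIntegral_of_lt (hQ : StrictMonoOn Q (Icc a b))
    (hab : a < b) : Q a * (b - a) < ∫ u in a..b, Q u := by
  obtain ⟨m, ham, hmb⟩ := exists_between hab
  have hQl : MonotoneOn Q (Icc a m) := hQ.monotoneOn.mono (Icc_subset_Icc le_rfl hmb.le)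
  have hQr : MonotoneOn Q (Icc m b) := hQ.monotoneOn.mono (Icc_subset_Icc ham.le le_rfl)
  have hQam : Q a < Q m := hQ (left_mem_Icc.2 hab.le) ⟨ham.le, hmb.le⟩ ham
  rw [← integral_add_adjacent_intervals (hQl.mono (uIcc_of_le ham.le).le).intervalIntegrable
    (hQr.mono (uIcc_of_le hmb.le).le).intervalIntegrable]
  linarith [hQl.mul_sub_le_intervalIntegral ham.le, hQr.mul_sub_le_intervalIntegral hmb.le,
    mul_lt_mul_of_pos_right hQam (sub_pos.2 hmb)]

lemma StrictMonoOn.intervalIntegral_lt_mul_sub_of_lt (hQ : StrictMonoOn Q (Icc a b))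
    (hab : a < b) : ∫ u in a..b, Q u < Q b * (b - a) := by
  obtain ⟨m, ham, hmb⟩ := exists_between hab
  have hQl : MonotoneOn Q (Icc a m) := hQ.monotoneOn.mono (Icc_subset_Icc le_rfl hmb.le)
  have hQr : MonotoneOn Q (Icc m b) := hQ.monotoneOn.mono (Icc_subset_Icc ham.le le_rfl)
  have hQmb : Q m < Q b := hQ ⟨ham.le, hmb.le⟩ (right_mem_Icc.2 hab.le) hmb
  rw [← integral_add_adjacent_intervals (hQl.mono (uIcc_of_le ham.le).le).intervalIntegrable
    (hQr.mono (uIcc_of_le hmb.le).le).intervalIntegrable]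
  linarith [hQl.intervalIntegral_le_mul_sub ham.le, hQr.intervalIntegral_le_mul_sub hmb.le,
    mul_lt_mul_of_pos_right hQmb (sub_pos.2 ham)]

lemma StrictMonoOn.mul_sub_lt_intervalIntegral (hQ : StrictMonoOn Q (uIcc a b)) (hab : a ≠ b) :
    Q a * (b - a) < ∫ u in a..b, Q u := by
  rcases hab.lt_or_gt with hab | hba
  · rw [uIcc_of_le hab.le] at hQ
    exact hQ.mul_sub_lt_intervalIntegral_of_lt hab
  · rw [uIcc_of_ge hba.le] at hQ
    rw [integral_symm]
    linarith [hQ.intervalIntegral_lt_mul_sub_of_lt hba]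

end IntegralBounds

section LeftInverse

variable {F Q : ℝ → ℝ} (hFcont : ContinuousOn F (Ici 0)) (hFmono : StrictMonoOn F (Ici 0))
  (hF0 : F 0 = 0) (hQF : ∀ x ≥ (0:ℝ), Q (F x) = x)
include hFcont hF0 hQF

lemma mem_Icc_and_apply_eq_of_mem_Icc {X p : ℝ} (hX : 0 ≤ X) (hp : p ∈ Icc 0 (F X)) :
    Q p ∈ Icc 0 X ∧ F (Q p) = p := by
  obtain ⟨t, ht, rfl⟩ := intermediate_value_Icc hX (hFcont.mono Icc_subset_Ici_self) (hF0 ▸ hp)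
  rw [hQF t ht.1]
  exact ⟨ht, rfl⟩

include hFmono

lemma strictMonoOn_Icc_of_leftInverse {X : ℝ} (hX : 0 ≤ X) : StrictMonoOn Q (Icc 0 (F X)) := by
  intro p hp p' hp' hpp'
  obtain ⟨hQp, hFQp⟩ := mem_Icc_and_apply_eq_of_mem_Icc hFcont hF0 hQF hX hp
  obtain ⟨hQp', hFQp'⟩ := mem_Icc_and_apply_eq_of_mem_Icc hFcont hF0 hQF hX hp'
  by_contra h
  have := hFmono.monotoneOn hQp'.1 hQp.1 (not_lt.1 h)
  rw [hFQp, hFQp'] at this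
  exact this.not_gt hpp'

lemma pos_and_lt_apply_of_inv_lt {X p x : ℝ} (hX : 0 ≤ X) (hp : p ∈ Icc 0 (F X))
    (hpx : Q p < x) : 0 < x ∧ p < F x := by
  obtain ⟨⟨hQp, -⟩, hFQp⟩ := mem_Icc_and_apply_eq_of_mem_Icc hFcont hF0 hQF hX hp
  have hx : 0 < x := hQp.trans_lt hpx
  exact ⟨hx, hFQp ▸ hFmono hQp hx.le hpx⟩

lemma mul_sub_lt_integral_sub_integral {x y : ℝ} (hx : 0 ≤ x) (hy : 0 ≤ y) (hxy : x ≠ y) :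
    x * (F y - F x) < (∫ u in 0..F y, Q u) - ∫ u in 0..F x, Q u := by
  set M := max x y
  have hmem {z : ℝ} (hz : 0 ≤ z) (hzM : z ≤ M) : F z ∈ Icc 0 (F M) :=
    ⟨hF0 ▸ hFmono.monotoneOn self_mem_Ici hz hz, hFmono.monotoneOn hz (hz.trans hzM) hzM⟩
  have hQ := strictMonoOn_Icc_of_leftInverse hFcont hFmono hF0 hQF (hx.trans (le_max_left x y))
  have hQint {a b : ℝ} (ha : a ∈ Icc 0 (F M)) (hb : b ∈ Icc 0 (F M)) :
      IntervalIntegrable Q volume a b :=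
    (hQ.monotoneOn.mono (uIcc_subset_Icc ha hb)).intervalIntegrable
  have hFx := hmem hx (le_max_left _ _)
  have hFy := hmem hy (le_max_right _ _)
  have h0 : (0 : ℝ) ∈ Icc 0 (F M) := ⟨le_rfl, hFx.1.trans hFx.2⟩
  have := (hQ.mono (uIcc_subset_Icc hFx hFy)).mul_sub_lt_intervalIntegral
    (hFmono.injOn.ne hx hy hxy)
  rw [integral_interval_sub_left (hQint h0 hFy) (hQint h0 hFx)]
  rwa [hQF x hx] at this

end LeftInverse

theorem stmt_3_general (F Finv : ℝ → ℝ) (α : ℝ) (hα : α ∈ Set.Ioo (0:ℝ) 1)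
    (hFcont : Continuous F)
    (hFmono : StrictMonoOn F (Set.Ici 0)) (hF0 : F 0 = 0)
    (hFinv' : ∀ x ≥ (0:ℝ), Finv (F x) = x)
    (η ζ : ℝ → ℝ)
    (hη : ∀ lam : ℝ, η lam =
      -(∫ y in (1 - F (lam / α))..1, Finv (1 - y)) + lam * (α - 1 + F (lam / α)) / α)
    (hζ : ∀ lam : ℝ, ζ lam =
      (∫ z in (1 - F (lam / α))..1, Finv (1 - z)) / (α - 1 + F (lam / α)))
    (lamhat : ℝ) (hlamhat_pos : 0 < lamhat) (hroot : η lamhat = 0) :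
    ζ lamhat = lamhat / α ∧
    ∀ lam ∈ Set.Ioi (α * Finv (1 - α)), lam ≠ lamhat → ζ lamhat < ζ lam := by
  obtain ⟨hα0, hα1⟩ := hα
  have hflip (p : ℝ) : ∫ z in (1 - p)..1, Finv (1 - z) = ∫ u in 0..p, Finv u := by
    rw [integral_comp_sub_left, sub_self, sub_sub_cancel]
  simp only [hflip] at hη hζ
  set xhat := lamhat / α
  have hxhat : 0 < xhat := div_pos hlamhat_pos hα0
  have hH : ∫ u in 0..F xhat, Finv u = xhat * (α - 1 + F xhat) := by
    have := hη lamhat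
    rw [hroot] at this
    linarith [mul_div_right_comm lamhat (α - 1 + F xhat) α]
  have hHpos : 0 < ∫ u in 0..F xhat, Finv u := by
    simpa [hF0] using
      mul_sub_lt_integral_sub_integral hFcont.continuousOn hFmono hF0 hFinv' le_rfl hxhat.le hxhat.ne
  have hDhat : 1 - α < F xhat := by
    linarith [(pos_iff_pos_of_mul_pos (hH ▸ hHpos)).1 hxhat]
  have hζhat : ζ lamhat = xhat := by
    rw [hζ, hH, mul_div_cancel_right₀ _ (by linarith)]
  refine ⟨hζhat, fun lam hlam hne => ?_⟩
  set x := lam / α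
  have hqx : Finv (1 - α) < x := (lt_div_iff₀ hα0).2 (by linarith [mem_Ioi.1 hlam])
  obtain ⟨hx, hD⟩ := pos_and_lt_apply_of_inv_lt hFcont.continuousOn hFmono hF0 hFinv' hxhat.le
    ⟨(sub_pos.2 hα1).le, hDhat.le⟩ hqx
  have hxne : xhat ≠ x := fun h => hne ((div_left_inj' hα0.ne').1 h).symm
  have htangent := mul_sub_lt_integral_sub_integral hFcont.continuousOn hFmono hF0 hFinv' hxhat.le hx.le hxne
  rw [hζhat, hζ, lt_div_iff₀ (by linarith)]
  linarith

/-- ζ(λ) = ∫_{1-F(λ/α)}^1 F⁻¹(1-z)dz / (α-1+F(λ/α)) attains its unique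
minimum on (αF⁻¹(1-α),∞) at λ̂, the unique root of η, with minimum value λ̂/α. -/
theorem stmt_3 (F Finv : ℝ → ℝ) (α : ℝ) (hα : α ∈ Set.Ioo (0:ℝ) 1)
    (hFcont : Continuous F) (hFdiff : Differentiable ℝ F)
    (hFmono : StrictMonoOn F (Set.Ici 0)) (hF0 : F 0 = 0)
    (hFinv : ∀ p ∈ Set.Icc (0:ℝ) 1, F (Finv p) = p)
    (hFinv' : ∀ x ≥ (0:ℝ), Finv (F x) = x)
    (hmean : IntervalIntegrable (fun y => Finv (1 - y)) MeasureTheory.volume 0 1)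
    (η ζ : ℝ → ℝ)
    (hη : ∀ lam : ℝ, η lam =
      -(∫ y in (1 - F (lam / α))..1, Finv (1 - y)) + lam * (α - 1 + F (lam / α)) / α)
    (hζ : ∀ lam : ℝ, ζ lam =
      (∫ z in (1 - F (lam / α))..1, Finv (1 - z)) / (α - 1 + F (lam / α)))
    (lamhat : ℝ) (hlamhat_pos : 0 < lamhat) (hroot : η lamhat = 0)
    (huniq : ∀ lam > (0:ℝ), η lam = 0 → lam = lamhat)
    (hrange : α * Finv (1 - α) < lamhat) :
    ζ lamhat = lamhat / α ∧
    ∀ lam ∈ Set.Ioi (α * Finv (1 - α)), lam ≠ lamhat → ζ lamhat < ζ lam :=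
  stmt_3_general F Finv α hα hFcont hFmono hF0 hFinv' η ζ hη hζ lamhat hlamhat_pos hroot
end

section
/- With φ_λ as above and λ ∈ [λ̂, ∞) (so that there exists z₀ ∈ [0,1) with φ_λ(z₀) ≥ φ_λ(1) = 0), for any ν > 0 and any increasing strictly concave U with U(x) → ∞ as x → ∞, the supremum over left-continuous increasing nonnegative G of ∫_0^1 (U(G(z)+ℓ) - ν G(z) φ'_λ(z)) dz is +∞. In particular, taking G_k(z) = k·1_{{z>z₀}}, the objective equals U(ℓ)z₀ + U(k+ℓ)(1-z₀) - νk(φ_λ(1)-φ_λ(z₀)) ≥ U(ℓ)z₀ + U(k+ℓ)(1-z₀) → ∞ as k → ∞. -/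
open Set MeasureTheory intervalIntegral Filter

/-!
The step quantiles `G_k = k·1_{z > z₀}` are admissible, and their objective is
`U(ℓ) z₀ + U(k + ℓ)(1 - z₀) - ν k ∫_{z₀}^1 φ'_λ`. Writing the penalty part of `φ_λ` as
`(λ/α)(α - min z α)` makes `φ'_λ` an honest a.e. derivative, so `∫_{z₀}^1 φ'_λ = φ_λ(1) - φ_λ(z₀) ≤ 0`,
and the objective is at least `U(ℓ) z₀ + U(k + ℓ)(1 - z₀)`, which tends to `∞` with `U`.
-/

lemma integral_ite_le_one {α a b : ℝ} (hab : a ≤ b) :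
    ∫ z in a..b, (if z ≤ α then (1:ℝ) else 0) = min b α - min a α := by
  have : (fun z : ℝ => if z ≤ α then (1:ℝ) else 0) = (Iic α).indicator 1 := by
    ext z; simp [Set.indicator_apply]
  rw [this, integral_of_le hab, integral_indicator_one measurableSet_Iic,
    measureReal_restrict_apply measurableSet_Iic, inter_comm, Ioc_inter_Iic, Real.volume_real_Ioc]
  rcases le_total a α with h | h
  · rw [min_eq_left h, max_eq_left (sub_nonneg.2 (le_min hab h))]
  · rw [min_eq_right h, min_eq_right (h.trans hab), sub_self, max_eq_right (sub_nonpos.2 h)]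

noncomputable def phi (Finv : ℝ → ℝ) (α lam z : ℝ) : ℝ :=
  -(∫ y in z..1, Finv (1 - y)) + lam * ((α - z) / α) * (if z ≤ α then 1 else 0)

noncomputable def phiDeriv (Finv : ℝ → ℝ) (α lam z : ℝ) : ℝ :=
  Finv (1 - z) - (lam / α) * (if z ≤ α then 1 else 0)

section phi

variable {Finv : ℝ → ℝ} {α lam a : ℝ}

lemma mul_sub_div_mul_ite_le_eq_div_mul_sub_min (z : ℝ) :
    lam * ((α - z) / α) * (if z ≤ α then 1 else 0) = lam / α * (α - min z α) := by
  split_ifs with h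
  · rw [min_eq_left h]; ring
  · rw [min_eq_right (le_of_not_ge h)]; ring

lemma antitone_ite_le (α : ℝ) : Antitone (fun z : ℝ => if z ≤ α then (1:ℝ) else 0) :=
  fun x y hxy => by
    dsimp only
    split_ifs with hy hx <;> norm_num
    exact hx (hxy.trans hy)

lemma intervalIntegrable_finv_one_sub
    (hmean : IntervalIntegrable (fun y => Finv (1 - y)) volume 0 1) (ha : a ∈ Icc (0:ℝ) 1) :
    IntervalIntegrable (fun y => Finv (1 - y)) volume a 1 :=
  hmean.mono_set (uIcc_subset_uIcc (by simp [ha.1, ha.2]) (by simp))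

lemma intervalIntegrable_phiDeriv (hmean : IntervalIntegrable (fun y => Finv (1 - y)) volume 0 1)
    (ha : a ∈ Icc (0:ℝ) 1) : IntervalIntegrable (phiDeriv Finv α lam) volume a 1 :=
  (intervalIntegrable_finv_one_sub hmean ha).sub
    ((antitone_ite_le α).intervalIntegrable.const_mul _)

lemma integral_phiDeriv (hmean : IntervalIntegrable (fun y => Finv (1 - y)) volume 0 1)
    (ha : a ∈ Icc (0:ℝ) 1) :
    ∫ z in a..1, phiDeriv Finv α lam z = phi Finv α lam 1 - phi Finv α lam a := by
  simp only [phiDeriv, phi]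
  rw [integral_sub (intervalIntegrable_finv_one_sub hmean ha)
      ((antitone_ite_le α).intervalIntegrable.const_mul _),
    intervalIntegral.integral_const_mul, integral_ite_le_one ha.2, integral_same,
    mul_sub_div_mul_ite_le_eq_div_mul_sub_min,
    mul_sub_div_mul_ite_le_eq_div_mul_sub_min]
  ring

end phi

section step

variable {z₀ k : ℝ}

lemma monotone_ite_lt (hk : 0 ≤ k) : Monotone (fun z : ℝ => if z₀ < z then k else 0) :=
  fun x y hxy => by
    dsimp only
    split_ifs with hx hy <;> first | rfl | exact hk | exact absurd (hx.trans_le hxy) hy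

lemma continuousWithinAt_Iic_ite_lt (z : ℝ) :
    ContinuousWithinAt (fun z : ℝ => if z₀ < z then k else 0) (Iic z) z := by
  by_cases hz : z₀ < z
  · refine continuousWithinAt_const.congr_of_eventuallyEq ?_ (if_pos hz)
    filter_upwards [nhdsWithin_le_nhds (isOpen_Ioi.mem_nhds hz)] with w hw
    exact if_pos hw
  · exact continuousWithinAt_const.congr (fun w hw => if_neg fun h => hz (h.trans_le hw))
      (if_neg hz)

lemma integral_step_objective (U ψ : ℝ → ℝ) (ℓ ν : ℝ) (hz₀ : z₀ ∈ Icc (0:ℝ) 1)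
    (hψ : IntervalIntegrable ψ volume z₀ 1) :
    ∫ z in (0:ℝ)..1, (U ((if z₀ < z then k else 0) + ℓ) - ν * (if z₀ < z then k else 0) * ψ z)
      = U ℓ * z₀ + U (k + ℓ) * (1 - z₀) - ν * k * ∫ z in z₀..1, ψ z := by
  set f := fun z => U ((if z₀ < z then k else 0) + ℓ) - ν * (if z₀ < z then k else 0) * ψ z
  have hleft : EqOn f (fun _ => U ℓ) (uIcc 0 z₀) := fun z hz => by
    simp [f, not_lt.2 (uIcc_of_le hz₀.1 ▸ hz).2]
  have hright : EqOn f (fun z => U (k + ℓ) - ν * k * ψ z) (uIoc z₀ 1) := fun z hz => by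
    simp [f, (uIoc_of_le hz₀.2 ▸ hz).1]
  have hψ' : IntervalIntegrable (fun z => U (k + ℓ) - ν * k * ψ z) volume z₀ 1 :=
    intervalIntegrable_const.sub (hψ.const_mul _)
  rw [← integral_add_adjacent_intervals
      (intervalIntegrable_const.congr (hleft.symm.mono uIoc_subset_uIcc))
      (hψ'.congr hright.symm),
    integral_congr hleft, integral_congr_ae (Eventually.of_forall hright),
    integral_sub intervalIntegrable_const (hψ.const_mul _), intervalIntegral.integral_const_mul]
  simp only [intervalIntegral.integral_const, smul_eq_mul]
  ring

end step

theorem stmt_9_general (Finv : ℝ → ℝ) (α ℓ lam ν : ℝ) (hν : 0 < ν)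
    (hmean : IntervalIntegrable (fun y => Finv (1 - y)) MeasureTheory.volume 0 1)
    (φ φ' : ℝ → ℝ)
    (hφ : ∀ z, φ z = -(∫ y in z..1, Finv (1 - y))
        + lam * ((α - z) / α) * (if z ≤ α then 1 else 0))
    (hφ' : ∀ z, φ' z = Finv (1 - z) - (lam / α) * (if z ≤ α then 1 else 0))
    (z₀ : ℝ) (hz₀ : z₀ ∈ Set.Ico (0:ℝ) 1) (hz₀φ : φ 1 ≤ φ z₀)
    (U : ℝ → ℝ)
    (hUtop : Filter.Tendsto U Filter.atTop Filter.atTop) :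
    ¬ BddAbove {v : ℝ | ∃ G : ℝ → ℝ,
        (∀ z ∈ Set.Ioo (0:ℝ) 1, 0 ≤ G z) ∧ MonotoneOn G (Set.Ioo 0 1) ∧
        (∀ z ∈ Set.Ioo (0:ℝ) 1, ContinuousWithinAt G (Set.Iic z) z) ∧
        v = ∫ z in (0:ℝ)..1, (U (G z + ℓ) - ν * G z * φ' z)} ∧
    (∀ k ≥ (0:ℝ),
      (∫ z in (0:ℝ)..1, (U ((if z₀ < z then k else 0) + ℓ)
          - ν * (if z₀ < z then k else 0) * φ' z))
        = U ℓ * z₀ + U (k + ℓ) * (1 - z₀) - ν * k * (φ 1 - φ z₀) ∧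
      U ℓ * z₀ + U (k + ℓ) * (1 - z₀)
        ≤ U ℓ * z₀ + U (k + ℓ) * (1 - z₀) - ν * k * (φ 1 - φ z₀)) ∧
    Filter.Tendsto (fun k => U ℓ * z₀ + U (k + ℓ) * (1 - z₀)) Filter.atTop Filter.atTop := by
  obtain rfl : φ = phi Finv α lam := funext hφ
  obtain rfl : φ' = phiDeriv Finv α lam := funext hφ'
  have hz₀' : z₀ ∈ Icc (0:ℝ) 1 := Ico_subset_Icc_self hz₀
  set obj := fun k : ℝ => ∫ z in (0:ℝ)..1, (U ((if z₀ < z then k else 0) + ℓ)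
    - ν * (if z₀ < z then k else 0) * phiDeriv Finv α lam z)
  have hobj (k : ℝ) : obj k = U ℓ * z₀ + U (k + ℓ) * (1 - z₀)
      - ν * k * (phi Finv α lam 1 - phi Finv α lam z₀) := by
    rw [← integral_phiDeriv hmean hz₀']
    exact integral_step_objective U _ ℓ ν hz₀'
      (intervalIntegrable_phiDeriv hmean hz₀')
  have hle (k : ℝ) (hk : 0 ≤ k) : U ℓ * z₀ + U (k + ℓ) * (1 - z₀)
      ≤ U ℓ * z₀ + U (k + ℓ) * (1 - z₀) - ν * k * (phi Finv α lam 1 - phi Finv α lam z₀) :=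
    (le_sub_self_iff _).2 (mul_nonpos_of_nonneg_of_nonpos (mul_nonneg hν.le hk) (sub_nonpos.2 hz₀φ))
  have htend : Tendsto (fun k => U ℓ * z₀ + U (k + ℓ) * (1 - z₀)) atTop atTop :=
    tendsto_atTop_add_const_left _ _ <|
      (hUtop.comp (tendsto_atTop_add_const_right _ ℓ tendsto_id)).atTop_mul_const (sub_pos.2 hz₀.2)
  refine ⟨fun hbdd => ?_, fun k hk => ⟨hobj k, hle k hk⟩, htend⟩
  refine not_bddAbove_of_tendsto_atTop (l := atTop) (f := fun n : ℕ => obj n) ?_ (hbdd.mono ?_)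
  · exact tendsto_atTop_mono (fun n => (hle n n.cast_nonneg).trans_eq (hobj n).symm)
      (htend.comp tendsto_natCast_atTop_atTop)
  · rintro _ ⟨n, rfl⟩
    exact ⟨_, fun z _ => ite_nonneg n.cast_nonneg le_rfl,
      (monotone_ite_lt n.cast_nonneg).monotoneOn _, fun z _ => continuousWithinAt_Iic_ite_lt z, rfl⟩

/-- if there is z₀ ∈ [0,1) with φ_λ(z₀) ≥ φ_λ(1) = 0, then the supremum of
∫_0^1 (U(G(z)+ℓ) - νG(z)φ'_λ(z))dz over quantiles G is +∞; in particular, for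
G_k = k·1_{z>z₀} the objective equals U(ℓ)z₀ + U(k+ℓ)(1-z₀) - νk(φ_λ(1)-φ_λ(z₀))
≥ U(ℓ)z₀ + U(k+ℓ)(1-z₀) → ∞. -/
theorem stmt_9 (F Finv : ℝ → ℝ) (α ℓ lam ν : ℝ) (hα : α ∈ Set.Ioo (0:ℝ) 1)
    (hℓ : 0 ≤ ℓ) (hlam : 0 < lam) (hν : 0 < ν)
    (hFcont : Continuous F) (hFmono : StrictMonoOn F (Set.Ici 0)) (hF0 : F 0 = 0)
    (hFinv : ∀ p ∈ Set.Icc (0:ℝ) 1, F (Finv p) = p)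
    (hmean : IntervalIntegrable (fun y => Finv (1 - y)) MeasureTheory.volume 0 1)
    (φ φ' : ℝ → ℝ)
    (hφ : ∀ z, φ z = -(∫ y in z..1, Finv (1 - y))
        + lam * ((α - z) / α) * (if z ≤ α then 1 else 0))
    (hφ' : ∀ z, φ' z = Finv (1 - z) - (lam / α) * (if z ≤ α then 1 else 0))
    (z₀ : ℝ) (hz₀ : z₀ ∈ Set.Ico (0:ℝ) 1) (hz₀φ : φ 1 ≤ φ z₀)
    (U : ℝ → ℝ) (hUmono : StrictMonoOn U (Set.Ici 0))
    (hUconc : StrictConcaveOn ℝ (Set.Ici 0) U)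
    (hUtop : Filter.Tendsto U Filter.atTop Filter.atTop) :
    ¬ BddAbove {v : ℝ | ∃ G : ℝ → ℝ,
        (∀ z ∈ Set.Ioo (0:ℝ) 1, 0 ≤ G z) ∧ MonotoneOn G (Set.Ioo 0 1) ∧
        (∀ z ∈ Set.Ioo (0:ℝ) 1, ContinuousWithinAt G (Set.Iic z) z) ∧
        v = ∫ z in (0:ℝ)..1, (U (G z + ℓ) - ν * G z * φ' z)} ∧
    (∀ k ≥ (0:ℝ),
      (∫ z in (0:ℝ)..1, (U ((if z₀ < z then k else 0) + ℓ)
          - ν * (if z₀ < z then k else 0) * φ' z))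
        = U ℓ * z₀ + U (k + ℓ) * (1 - z₀) - ν * k * (φ 1 - φ z₀) ∧
      U ℓ * z₀ + U (k + ℓ) * (1 - z₀)
        ≤ U ℓ * z₀ + U (k + ℓ) * (1 - z₀) - ν * k * (φ 1 - φ z₀)) ∧
    Filter.Tendsto (fun k => U ℓ * z₀ + U (k + ℓ) * (1 - z₀)) Filter.atTop Filter.atTop :=
  stmt_9_general Finv α ℓ lam ν hν hmean φ φ' hφ hφ' z₀ hz₀ hz₀φ U hUtop
end

section
/- In the setting of the concave-envelope lemma (0 < λ < λ̂, log-normal F), the tangency abscissa z₂(λ) and contact point z₁(λ) satisfy: lim_{λ→0+} z₁(λ) = lim_{λ→0+} z₂(λ) = α, and lim_{λ→λ̂} z₁(λ) = 1 - F(λ̂/α), lim_{λ→λ̂} z₂(λ) = 1. -/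
/-!
Write `b = Finv (1 - z₂)` and `t = λ / α`, so that `z₂ = 1 - F b` and `z₁ = 1 - F (b + t)`.
Since `z₁ < α < z₂`, the point `B = Finv (1 - α)` lies in `(b, b + t)`; hence `b → B` as `λ → 0`,
and both contact points tend to `1 - F B = α`.

Integrating the inverse function, `∫_{F b}^{F a} Finv = a F a - b F b - ∫_b^a F`, turns the tangency
condition into `∫_b^{b+t} F = t (1 - α)` and the equation defining `λ̂` into
`∫_0^ĥ F = ĥ (1 - α)` with `ĥ = λ̂ / α`. Comparing these two areas gives
`b (F t - (1 - α)) ≤ α (ĥ - t)`, while `F ĥ > 1 - α`; so `b → 0` as `λ → λ̂`, whence `z₂ → 1` and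
`z₁ → 1 - F ĥ`.
-/

open Set MeasureTheory intervalIntegral Filter ProbabilityTheory Topology
open scoped NNReal

theorem integral_inverse_add_integral_eq {F G : ℝ → ℝ} {a b p q : ℝ} (hba : b < a)
    (hFc : ContinuousOn F (Icc b a)) (hFd : ∀ x ∈ Ioo b a, DifferentiableAt ℝ F x)
    (hF_Icc : MapsTo F (Icc b a) (Icc p q)) (hF_Ioo : MapsTo F (Ioo b a) (Ioo p q))
    (hGc : ContinuousOn G (Ioo p q)) (hGi : IntervalIntegrable G volume p q)
    (hGF : ∀ x ∈ Ioo b a, G (F x) = x) :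
    (∫ u in F b..F a, G u) + ∫ x in b..a, F x = a * F a - b * F b := by
  have hpq : Icc p q ⊆ uIcc p q := Icc_subset_uIcc
  set h : ℝ → ℝ := fun y ↦ (∫ u in F b..F y, G u) + (∫ x in b..y, F x) - y * F y
  have hcont : ContinuousOn h (Icc b a) := by
    have hG_prim := (continuousOn_primitive_interval' hGi
      (hpq (hF_Icc (left_mem_Icc.2 hba.le)))).comp hFc (hF_Icc.mono_right hpq)
    have hF_prim := continuousOn_primitive_interval (μ := volume)
      (by rw [uIcc_of_le hba.le]; exact hFc.integrableOn_Icc)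
    rw [uIcc_of_le hba.le] at hF_prim
    exact (hG_prim.add hF_prim).sub (continuousOn_id.mul hFc)
  have hderiv : ∀ y ∈ Ioo b a, HasDerivAt h 0 y := by
    intro y hy
    have hFy := (hFd y hy).hasDerivAt
    have hG_at : ContinuousAt G (F y) :=
      hGc.continuousAt (Ioo_mem_nhds (hF_Ioo hy).1 (hF_Ioo hy).2)
    have hG_prim : HasDerivAt (fun w ↦ ∫ u in F b..w, G u) (G (F y)) (F y) :=
      integral_hasDerivAt_right
        (hGi.mono_set (uIcc_subset_uIcc (hpq (hF_Icc (left_mem_Icc.2 hba.le)))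
          (hpq (Ioo_subset_Icc_self (hF_Ioo hy)))))
        (hGc.stronglyMeasurableAtFilter isOpen_Ioo _ (hF_Ioo hy)) hG_at
    have hF_prim : HasDerivAt (fun y ↦ ∫ x in b..y, F x) (F y) y :=
      integral_hasDerivAt_right
        ((hFc.mono (Icc_subset_Icc_right hy.2.le)).intervalIntegrable_of_Icc hy.1.le)
        ((hFc.mono Ioo_subset_Icc_self).stronglyMeasurableAtFilter isOpen_Ioo _ hy)
        hFy.continuousAt
    have := ((hG_prim.comp y hFy).add hF_prim).sub ((hasDerivAt_id y).mul hFy)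
    rw [hGF y hy] at this
    exact this.congr_deriv (by simp only [id]; ring)
  obtain ⟨c, -, hc⟩ := exists_hasDerivAt_eq_slope h (fun _ ↦ 0) hba hcont hderiv
  have : h a = h b := by
    rw [eq_comm, div_eq_zero_iff, sub_eq_zero] at hc
    exact hc.resolve_right (sub_ne_zero.2 hba.ne')
  simp only [h, integral_same, add_zero] at this
  linarith

lemma cdf_gaussianReal_eq_integral (m : ℝ) {v : ℝ≥0} (hv : v ≠ 0) (x : ℝ) :
    cdf (gaussianReal m v) x = ∫ t in Iic x, gaussianPDFReal m v t := by
  rw [cdf_eq_real, measureReal_def, gaussianReal_apply_eq_integral m hv,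
    ENNReal.toReal_ofReal (setIntegral_nonneg measurableSet_Iic
      fun t _ ↦ gaussianPDFReal_nonneg m v t)]

lemma hasDerivAt_cdf_gaussianReal (m : ℝ) {v : ℝ≥0} (hv : v ≠ 0) (x : ℝ) :
    HasDerivAt (cdf (gaussianReal m v)) (gaussianPDFReal m v x) x := by
  have hint := integrable_gaussianPDFReal m v
  have hcont : Continuous (gaussianPDFReal m v) := by
    unfold gaussianPDFReal; fun_prop
  have hcdf : cdf (gaussianReal m v) = fun y ↦ cdf (gaussianReal m v) x +
      ∫ t in x..y, gaussianPDFReal m v t := by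
    ext y
    rw [← integral_Iic_sub_Iic hint.integrableOn hint.integrableOn,
      cdf_gaussianReal_eq_integral m hv, cdf_gaussianReal_eq_integral m hv]
    ring
  rw [hcdf]
  exact (integral_hasDerivAt_right hint.intervalIntegrable
    (hcont.stronglyMeasurableAtFilter _ _) hcont.continuousAt).const_add _

theorem integral_eq_of_tangency {g φ φ' : ℝ → ℝ} {α lam z₁ z₂ : ℝ}
    (hg : IntervalIntegrable g volume 0 1)
    (hφ : ∀ z, φ z = -(∫ y in z..1, g y) + lam * ((α - z) / α) * (if z ≤ α then 1 else 0))
    (hφ' : ∀ z, φ' z = g z - (lam / α) * (if z ≤ α then 1 else 0))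
    (hz₁ : z₁ ∈ Icc 0 α) (hz₂ : z₂ ∈ Ioc α 1)
    (htangent : φ z₂ - φ z₁ - φ' z₂ * (z₂ - z₁) = 0) :
    ∫ y in z₁..z₂, g y = lam / α * (α - z₁) + g z₂ * (z₂ - z₁) := by
  have hsub : ∀ {x y}, x ∈ Icc (0 : ℝ) 1 → y ∈ Icc (0 : ℝ) 1 → IntervalIntegrable g volume x y :=
    fun hx hy ↦ hg.mono_set (uIcc_subset_uIcc (Icc_subset_uIcc hx) (Icc_subset_uIcc hy))
  have h₁ : z₁ ∈ Icc (0 : ℝ) 1 := ⟨hz₁.1, by linarith [hz₁.2, hz₂.1, hz₂.2]⟩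
  have h₂ : z₂ ∈ Icc (0 : ℝ) 1 := ⟨by linarith [hz₁.1, hz₁.2, hz₂.1], hz₂.2⟩
  have hsplit := integral_add_adjacent_intervals (hsub h₁ h₂) (hsub h₂ ⟨zero_le_one, le_rfl⟩)
  rw [hφ, hφ, hφ', if_neg (not_le.2 hz₂.1), if_pos hz₁.2] at htangent
  linear_combination htangent + hsplit

structure IsCDFWithQuantile (F Finv : ℝ → ℝ) : Prop where
  mono : Monotone F
  le_one : ∀ x, F x ≤ 1
  eq_zero_of_nonpos : ∀ x ≤ 0, F x = 0
  continuous : Continuous F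
  differentiableAt : ∀ x > 0, DifferentiableAt ℝ F x
  apply_quantile : ∀ p ∈ Ioo (0 : ℝ) 1, F (Finv p) = p
  quantile_apply : ∀ x > 0, Finv (F x) = x

namespace IsCDFWithQuantile

variable {F Finv : ℝ → ℝ}

theorem of_logNormal {m : ℝ} {v : ℝ≥0} (hv : v ≠ 0)
    (hF : ∀ x > 0, F x = (gaussianReal m v (Iic (Real.log x))).toReal)
    (hF_nonpos : ∀ x ≤ 0, F x = 0)
    (hFinv : ∀ p ∈ Ioo (0 : ℝ) 1, F (Finv p) = p) (hFinv' : ∀ x > 0, Finv (F x) = x) :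
    IsCDFWithQuantile F Finv := by
  set Φ := cdf (gaussianReal m v)
  have hF_pos : ∀ x > 0, F x = Φ (Real.log x) := fun x hx ↦ by
    rw [hF x hx, cdf_eq_real, measureReal_def]
  have hF_near : ∀ x > 0, F =ᶠ[𝓝 x] Φ ∘ Real.log := fun x hx ↦
    eventually_of_mem (Ioi_mem_nhds hx) fun y hy ↦ hF_pos y hy
  have hdiff : ∀ x > 0, DifferentiableAt ℝ F x := fun x hx ↦
    (((hasDerivAt_cdf_gaussianReal m hv _).comp x
      (Real.hasDerivAt_log hx.ne')).differentiableAt).congr_of_eventuallyEq (hF_near x hx)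
  have hmono : Monotone F := fun x y hxy ↦ by
    rcases le_or_gt x 0 with hx | hx
    · rw [hF_nonpos x hx]
      rcases le_or_gt y 0 with hy | hy
      · rw [hF_nonpos y hy]
      · rw [hF_pos y hy]; exact cdf_nonneg _ _
    · rw [hF_pos x hx, hF_pos y (hx.trans_le hxy)]
      exact monotone_cdf _ (Real.log_le_log hx hxy)
  have hle_one : ∀ x, F x ≤ 1 := fun x ↦ by
    rcases le_or_gt x 0 with hx | hx
    · rw [hF_nonpos x hx]; exact zero_le_one
    · rw [hF_pos x hx]; exact cdf_le_one _ _
  have hF_zero : F 0 = 0 := hF_nonpos 0 le_rfl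
  have hcont_zero : ContinuousAt F 0 := by
    refine continuousAt_iff_continuous_left_right.2
      ⟨continuousWithinAt_const.congr (fun y hy ↦ hF_nonpos y hy) hF_zero, ?_⟩
    rw [← continuousWithinAt_Ioi_iff_Ici, ContinuousWithinAt, hF_zero]
    exact ((tendsto_cdf_atBot _).comp Real.tendsto_log_nhdsGT_zero).congr'
      (eventually_nhdsWithin_of_forall fun y hy ↦ (hF_pos y hy).symm)
  refine ⟨hmono, hle_one, hF_nonpos, continuous_iff_continuousAt.2 fun x ↦ ?_, hdiff, hFinv,
    hFinv'⟩
  rcases lt_trichotomy x 0 with hx | rfl | hx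
  · exact continuousAt_const.congr (eventually_of_mem (Iio_mem_nhds hx)
      fun y hy ↦ (hF_nonpos y hy.le).symm)
  · exact hcont_zero
  · exact (hdiff x hx).continuousAt

theorem nonneg (h : IsCDFWithQuantile F Finv) (x : ℝ) : 0 ≤ F x :=
  (h.eq_zero_of_nonpos _ (min_le_right x 0)).symm.le.trans (h.mono (min_le_left x 0))

theorem mem_Ioo_of_pos (h : IsCDFWithQuantile F Finv) {x : ℝ} (hx : 0 < x) :
    F x ∈ Ioo 0 1 := by
  have hinj : ∀ y > 0, F y = F x → y = x := fun y hy hyx ↦ by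
    rw [← h.quantile_apply y hy, hyx, h.quantile_apply x hx]
  refine ⟨(h.nonneg x).lt_of_ne fun h0 ↦ ?_, (h.le_one x).lt_of_ne fun h1 ↦ ?_⟩
  · have : F (x / 2) = F x := le_antisymm (h.mono (by linarith)) (h0.symm.le.trans (h.nonneg _))
    linarith [hinj _ (by linarith) this]
  · have : F (x + 1) = F x := le_antisymm ((h.le_one _).trans h1.ge) (h.mono (by linarith))
    linarith [hinj _ (by linarith) this]

theorem quantile_pos (h : IsCDFWithQuantile F Finv) {p : ℝ} (hp : p ∈ Ioo 0 1) :
    0 < Finv p := by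
  by_contra hle
  have := h.apply_quantile p hp
  rw [h.eq_zero_of_nonpos _ (not_lt.1 hle)] at this
  exact hp.1.ne this

theorem strictMonoOn_quantile (h : IsCDFWithQuantile F Finv) :
    StrictMonoOn Finv (Ioo 0 1) := fun p hp q hq hpq ↦
  h.mono.reflect_lt (by rwa [h.apply_quantile p hp, h.apply_quantile q hq])

theorem continuousOn_quantile (h : IsCDFWithQuantile F Finv) : ContinuousOn Finv (Ioo 0 1) :=
  fun _ hp ↦ (continuousAt_of_monotoneOn_of_image_mem_nhds h.strictMonoOn_quantile.monotoneOn
    (Ioo_mem_nhds hp.1 hp.2) (mem_of_superset (Ioi_mem_nhds (h.quantile_pos hp))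
      fun x hx ↦ ⟨F x, h.mem_Ioo_of_pos hx, h.quantile_apply x hx⟩)).continuousWithinAt

theorem integral_quantile_one_sub (h : IsCDFWithQuantile F Finv)
    (hint : IntervalIntegrable Finv volume 0 1) {a b : ℝ} (hb : 0 ≤ b) (hba : b < a) :
    ∫ y in 1 - F a..1 - F b, Finv (1 - y) = a * F a - b * F b - ∫ x in b..a, F x := by
  have := integral_inverse_add_integral_eq hba h.continuous.continuousOn
    (fun x hx ↦ h.differentiableAt x (hb.trans_lt hx.1)) (fun x _ ↦ ⟨h.nonneg x, h.le_one x⟩)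
    (fun x hx ↦ h.mem_Ioo_of_pos (hb.trans_lt hx.1)) h.continuousOn_quantile hint
    (fun x hx ↦ h.quantile_apply x (hb.trans_lt hx.1))
  rw [integral_comp_sub_left, sub_sub_cancel, sub_sub_cancel]
  linarith

theorem tangency_integral_eq (h : IsCDFWithQuantile F Finv)
    (hint : IntervalIntegrable Finv volume 0 1) {α t z₁ z₂ : ℝ} (hz₂ : z₂ ∈ Ioo 0 1)
    (ht : 0 < t) (hz₁ : z₁ = 1 - F (Finv (1 - z₂) + t))
    (htangent : ∫ y in z₁..z₂, Finv (1 - y) = t * (α - z₁) + Finv (1 - z₂) * (z₂ - z₁)) :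
    ∫ x in Finv (1 - z₂)..Finv (1 - z₂) + t, F x = t * (1 - α) := by
  have hp : 1 - z₂ ∈ Ioo 0 1 := ⟨by linarith [hz₂.2], by linarith [hz₂.1]⟩
  have hFb := h.apply_quantile _ hp
  have hFa : F (Finv (1 - z₂) + t) = 1 - z₁ := by linarith
  have := h.integral_quantile_one_sub hint (h.quantile_pos hp).le (lt_add_of_pos_right _ ht)
  rw [hFa, hFb, sub_sub_cancel, sub_sub_cancel] at this
  linear_combination this - htangent

theorem quantile_lt_lt {α t z₁ z₂ : ℝ} (h : IsCDFWithQuantile F Finv) (hz₁ : z₁ ∈ Ioo 0 α)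
    (hz₂ : z₂ ∈ Ioo α 1) (hz₁_eq : z₁ = 1 - F (Finv (1 - z₂) + t)) :
    Finv (1 - z₂) < Finv (1 - α) ∧ Finv (1 - α) < Finv (1 - z₂) + t := by
  have hα : 1 - α ∈ Ioo 0 1 := ⟨by linarith [hz₂.1, hz₂.2], by linarith [hz₁.1, hz₁.2]⟩
  refine ⟨h.strictMonoOn_quantile ⟨by linarith [hz₂.2], by linarith [hz₁.1, hz₁.2, hz₂.1]⟩ hα
    (by linarith [hz₂.1]), h.mono.reflect_lt ?_⟩
  rw [h.apply_quantile _ hα]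
  linarith [hz₁.2]

theorem tangency_spec (h : IsCDFWithQuantile F Finv) (hint : IntervalIntegrable Finv volume 0 1)
    {φ φ' : ℝ → ℝ} {α lam z₁ z₂ : ℝ}
    (hφ : ∀ z, φ z = -(∫ y in z..1, Finv (1 - y)) + lam * ((α - z) / α) * (if z ≤ α then 1 else 0))
    (hφ' : ∀ z, φ' z = Finv (1 - z) - (lam / α) * (if z ≤ α then 1 else 0))
    (hlam : 0 < lam) (hz₁ : z₁ ∈ Ioo 0 α) (hz₂ : z₂ ∈ Ioo α 1)
    (hz₁_eq : z₁ = 1 - F (Finv (1 - z₂) + lam / α))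
    (htangent : φ z₂ - φ z₁ - φ' z₂ * (z₂ - z₁) = 0) :
    z₂ = 1 - F (Finv (1 - z₂)) ∧
      (Finv (1 - z₂) < Finv (1 - α) ∧ Finv (1 - α) < Finv (1 - z₂) + lam / α) ∧
      0 ≤ Finv (1 - z₂) ∧ F (Finv (1 - z₂)) ≤ 1 - α ∧
      ∫ x in Finv (1 - z₂)..Finv (1 - z₂) + lam / α, F x = lam / α * (1 - α) := by
  have hp : 1 - z₂ ∈ Ioo 0 1 := ⟨by linarith [hz₂.2], by linarith [hz₁.1, hz₁.2, hz₂.1]⟩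
  have hFb := h.apply_quantile _ hp
  have hg : IntervalIntegrable (fun y ↦ Finv (1 - y)) volume 0 1 := by
    simpa using (hint.comp_sub_left 1).symm
  refine ⟨by linarith, h.quantile_lt_lt hz₁ hz₂ hz₁_eq, (h.quantile_pos hp).le,
    by linarith [hz₂.1], h.tangency_integral_eq hint ⟨by linarith [hp.2], hz₂.2⟩
      (div_pos hlam (hz₁.1.trans hz₁.2)) hz₁_eq ?_⟩
  exact integral_eq_of_tangency hg hφ hφ' (Ioo_subset_Icc_self hz₁) (Ioo_subset_Ioc_self hz₂)
    htangent

end IsCDFWithQuantile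

theorem integral_le_mul_of_monotone {F : ℝ → ℝ} (hF : Monotone F) {a b : ℝ} (hab : a ≤ b) :
    ∫ x in a..b, F x ≤ (b - a) * F b := by
  simpa using integral_mono_on hab (hF.intervalIntegrable (μ := volume))
    _root_.intervalIntegrable_const fun x hx ↦ hF hx.2

theorem mul_le_integral_of_monotone {F : ℝ → ℝ} (hF : Monotone F) {a b : ℝ} (hab : a ≤ b) :
    (b - a) * F a ≤ ∫ x in a..b, F x := by
  simpa using integral_mono_on hab _root_.intervalIntegrable_const
    (hF.intervalIntegrable (μ := volume)) fun x hx ↦ hF hx.1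

theorem lt_apply_of_integral_eq {F : ℝ → ℝ} (hF : Monotone F) (hFc : Continuous F) {c h : ℝ}
    (hh : 0 < h) (hc : F 0 < c) (hroot : ∫ x in 0..h, F x = h * c) : c < F h := by
  by_contra hle
  have := integral_lt_integral_of_continuousOn_of_le_of_exists_lt hh hFc.continuousOn
    continuousOn_const (fun x hx ↦ (hF hx.2).trans (not_lt.1 hle)) ⟨0, left_mem_Icc.2 hh.le, hc⟩
  simp [hroot, mul_comm] at this

theorem mul_sub_le_of_integral_eq {F : ℝ → ℝ} (hF : Monotone F) (hF1 : ∀ x, F x ≤ 1)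
    {b t c h : ℝ} (hb : 0 ≤ b) (hFb : F b ≤ c) (hth : t ≤ h)
    (hroot : ∫ x in 0..h, F x = h * c) (htangent : ∫ x in b..b + t, F x = t * c) :
    b * (F t - c) ≤ (h - t) * (1 - c) := by
  have hi : ∀ x y, IntervalIntegrable F volume x y := fun _ _ ↦ hF.intervalIntegrable
  have s₁ := integral_add_adjacent_intervals (hi 0 b) (hi b (b + t))
  have s₂ := integral_add_adjacent_intervals (hi 0 t) (hi t (b + t))
  have s₃ := integral_add_adjacent_intervals (hi 0 t) (hi t h)
  have e₁ := integral_le_mul_of_monotone hF hb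
  have e₂ := mul_le_integral_of_monotone hF (le_add_of_nonneg_left hb : t ≤ b + t)
  have e₃ : ∫ x in t..h, F x ≤ (h - t) * 1 := by
    simpa using integral_mono_on hth (hi t h) _root_.intervalIntegrable_const fun x _ ↦ hF1 x
  have e₄ := mul_le_mul_of_nonneg_left hFb hb
  simp only [sub_zero, add_sub_cancel_right] at e₁ e₂
  linarith

theorem tendsto_nhds_zero_of_integral_eq {F : ℝ → ℝ} (hF : Monotone F) (hFc : Continuous F)
    (hF1 : ∀ x, F x ≤ 1) {c h : ℝ} (hh : 0 < h) (hc : F 0 < c)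
    (hroot : ∫ x in 0..h, F x = h * c) {l : Filter ℝ} {b t : ℝ → ℝ} (ht : Tendsto t l (𝓝 h))
    (hbt : ∀ᶠ x in l, 0 ≤ b x ∧ F (b x) ≤ c ∧ t x ≤ h ∧ ∫ y in b x..b x + t x, F y = t x * c) :
    Tendsto b l (𝓝 0) := by
  have hFh := lt_apply_of_integral_eq hF hFc hh hc hroot
  have hFt : Tendsto (fun x ↦ F (t x) - c) l (𝓝 (F h - c)) :=
    ((hFc.tendsto h).comp ht).sub_const c
  have hbound : Tendsto (fun x ↦ (h - t x) * (1 - c) / (F (t x) - c)) l (𝓝 0) := by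
    have := (((tendsto_const_nhds (x := h)).sub ht).mul_const (1 - c)).div hFt (sub_pos.2 hFh).ne'
    rwa [sub_self, zero_mul, zero_div] at this
  refine tendsto_of_tendsto_of_tendsto_of_le_of_le' tendsto_const_nhds hbound
    (hbt.mono fun x hx ↦ hx.1) ?_
  filter_upwards [hbt, hFt.eventually (lt_mem_nhds (sub_pos.2 hFh))]
    with x ⟨hb, hFb, hth, htangent⟩ hpos
  rw [le_div_iff₀ hpos]
  exact mul_sub_le_of_integral_eq hF hF1 hb hFb hth hroot htangent

theorem tendsto_one_sub_comp {F : ℝ → ℝ} (hF : Continuous F) {l : Filter ℝ} {z b : ℝ → ℝ}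
    {β : ℝ} (hb : Tendsto b l (𝓝 β)) (hz : ∀ᶠ x in l, z x = 1 - F (b x)) :
    Tendsto z l (𝓝 (1 - F β)) :=
  (tendsto_const_nhds.sub ((hF.tendsto β).comp hb)).congr' (hz.mono fun _ hx ↦ hx.symm)


theorem tendsto_tangency_points_of_lt_lt_add {F : ℝ → ℝ} (hF : Continuous F) {l : Filter ℝ}
    {z₁ z₂ b t : ℝ → ℝ} {B : ℝ} (ht : Tendsto t l (𝓝 0))
    (hz₁ : ∀ᶠ x in l, z₁ x = 1 - F (b x + t x))
    (hz₂ : ∀ᶠ x in l, z₂ x = 1 - F (b x) ∧ b x < B ∧ B < b x + t x) :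
    Tendsto z₁ l (𝓝 (1 - F B)) ∧ Tendsto z₂ l (𝓝 (1 - F B)) := by
  have hb : Tendsto b l (𝓝 B) :=
    tendsto_of_tendsto_of_tendsto_of_le_of_le' (by simpa using tendsto_const_nhds.sub ht)
      tendsto_const_nhds (hz₂.mono fun _ hx ↦ by linarith [hx.2.2]) (hz₂.mono fun _ hx ↦ hx.2.1.le)
  exact ⟨by simpa using tendsto_one_sub_comp hF (hb.add ht) hz₁,
    tendsto_one_sub_comp hF hb (hz₂.mono fun _ hx ↦ hx.1)⟩

theorem tendsto_tangency_points_of_integral_eq {F : ℝ → ℝ} (hF : Monotone F)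
    (hFc : Continuous F) (hF1 : ∀ x, F x ≤ 1) {c h : ℝ} (hh : 0 < h) (hc : F 0 < c)
    (hroot : ∫ x in 0..h, F x = h * c) {l : Filter ℝ} {z₁ z₂ b t : ℝ → ℝ}
    (ht : Tendsto t l (𝓝 h)) (hth : ∀ᶠ x in l, t x ≤ h)
    (hz₁ : ∀ᶠ x in l, z₁ x = 1 - F (b x + t x))
    (hz₂ : ∀ᶠ x in l, z₂ x = 1 - F (b x) ∧
      0 ≤ b x ∧ F (b x) ≤ c ∧ ∫ y in b x..b x + t x, F y = t x * c) :
    Tendsto z₁ l (𝓝 (1 - F h)) ∧ Tendsto z₂ l (𝓝 (1 - F 0)) := by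
  have hb : Tendsto b l (𝓝 0) := tendsto_nhds_zero_of_integral_eq hF hFc hF1 hh hc hroot ht
    ((hz₂.and hth).mono fun _ ⟨⟨_, hb, hFb, htangent⟩, hth⟩ ↦ ⟨hb, hFb, hth, htangent⟩)
  exact ⟨by simpa using tendsto_one_sub_comp hFc (hb.add ht) hz₁,
    tendsto_one_sub_comp hFc hb (hz₂.mono fun _ hx ↦ hx.1)⟩

/-- limits of z₁(λ), z₂(λ): both tend to α as λ→0+, and tend to
1-F(λ̂/α) and 1 respectively as λ→λ̂⁻. -/
theorem stmt_12 (F Finv : ℝ → ℝ) (α : ℝ) (hα : α ∈ Set.Ioo (0:ℝ) 1)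
    (m σ : ℝ) (hσ : 0 < σ)
    (hlognormal : ∀ x > (0:ℝ), F x =
      ((ProbabilityTheory.gaussianReal m (⟨σ^2, by positivity⟩ : NNReal))
        (Set.Iic (Real.log x))).toReal)
    (hFneg : ∀ x ≤ (0:ℝ), F x = 0)
    (hFinv : ∀ p ∈ Set.Ioo (0:ℝ) 1, F (Finv p) = p)
    (hFinv' : ∀ x > (0:ℝ), Finv (F x) = x)
    (hmean : IntervalIntegrable (fun y => Finv (1 - y)) MeasureTheory.volume 0 1)
    (φ φ' : ℝ → ℝ → ℝ) (s : ℝ → ℝ → ℝ)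
    (hφ : ∀ lam z, φ lam z = -(∫ y in z..1, Finv (1 - y))
        + lam * ((α - z) / α) * (if z ≤ α then 1 else 0))
    (hφ' : ∀ lam z, φ' lam z = Finv (1 - z) - (lam / α) * (if z ≤ α then 1 else 0))
    (hs : ∀ lam z, s lam z = 1 - F (Finv (1 - z) + lam / α))
    (lamhat : ℝ) (hlamhat_pos : 0 < lamhat)
    (hroot : -(∫ y in (1 - F (lamhat / α))..1, Finv (1 - y))
        + lamhat * (α - 1 + F (lamhat / α)) / α = 0)
    (z1 z2 : ℝ → ℝ)
    (hz : ∀ lam ∈ Set.Ioo (0:ℝ) lamhat,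
      z2 lam ∈ Set.Ioo α 1 ∧
      φ lam (z2 lam) - φ lam (s lam (z2 lam))
        - φ' lam (z2 lam) * (z2 lam - s lam (z2 lam)) = 0 ∧
      (∀ z ∈ Set.Ioo α 1,
        φ lam z - φ lam (s lam z) - φ' lam z * (z - s lam z) = 0 → z = z2 lam) ∧
      z1 lam = s lam (z2 lam) ∧ z1 lam ∈ Set.Ioo (0:ℝ) α) :
    Filter.Tendsto z1 (nhdsWithin 0 (Set.Ioi 0)) (nhds α) ∧
    Filter.Tendsto z2 (nhdsWithin 0 (Set.Ioi 0)) (nhds α) ∧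
    Filter.Tendsto z1 (nhdsWithin lamhat (Set.Iio lamhat)) (nhds (1 - F (lamhat / α))) ∧
    Filter.Tendsto z2 (nhdsWithin lamhat (Set.Iio lamhat)) (nhds 1) := by
  obtain ⟨hα0, hα1⟩ := hα
  have hF : IsCDFWithQuantile F Finv := by
    refine .of_logNormal ?_ hlognormal hFneg hFinv hFinv'
    exact fun hv ↦ pow_ne_zero 2 hσ.ne' (congrArg NNReal.toReal hv)
  have hint : IntervalIntegrable Finv volume 0 1 := by
    simpa using (hmean.comp_sub_left 1).symm
  have hz1 : ∀ lam ∈ Ioo 0 lamhat, z1 lam = 1 - F (Finv (1 - z2 lam) + lam / α) :=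
    fun lam hlam ↦ (hz lam hlam).2.2.2.1.trans (hs _ _)
  have hspec := fun lam (hlam : lam ∈ Ioo 0 lamhat) ↦
    hF.tangency_spec hint (hφ lam) (hφ' lam) hlam.1 (hz lam hlam).2.2.2.2 (hz lam hlam).1
      (hz1 lam hlam) ((hz lam hlam).2.2.2.1 ▸ (hz lam hlam).2.1)
  have hF0 : F 0 = 0 := hF.eq_zero_of_nonpos 0 le_rfl
  have hroot' : ∫ x in 0..lamhat / α, F x = lamhat / α * (1 - α) := by
    have := hF.integral_quantile_one_sub hint le_rfl (div_pos hlamhat_pos hα0)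
    rw [hF0, sub_zero, zero_mul, sub_zero] at this
    linear_combination this + hroot
  have h0 : ∀ᶠ lam in 𝓝[>] 0, lam ∈ Ioo 0 lamhat := Ioo_mem_nhdsGT hlamhat_pos
  have hhat : ∀ᶠ lam in 𝓝[<] lamhat, lam ∈ Ioo 0 lamhat := Ioo_mem_nhdsLT hlamhat_pos
  obtain ⟨hz1_0, hz2_0⟩ := tendsto_tangency_points_of_lt_lt_add hF.continuous
    (((continuous_id.div_const α).tendsto' 0 0 (zero_div α)).mono_left nhdsWithin_le_nhds)
    (h0.mono hz1) (h0.mono fun lam h ↦ ⟨(hspec lam h).1, (hspec lam h).2.1⟩)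
  obtain ⟨hz1_hat, hz2_hat⟩ := tendsto_tangency_points_of_integral_eq hF.mono hF.continuous
    hF.le_one (div_pos hlamhat_pos hα0) (by linarith) hroot'
    (((continuous_id.div_const α).tendsto lamhat).mono_left nhdsWithin_le_nhds)
    (hhat.mono fun _ h ↦ div_le_div_of_nonneg_right h.2.le hα0.le) (hhat.mono hz1)
    (hhat.mono fun lam h ↦ ⟨(hspec lam h).1, (hspec lam h).2.2⟩)
  rw [hF.apply_quantile _ ⟨by linarith, by linarith⟩, sub_sub_cancel] at hz1_0 hz2_0
  rw [hF0, sub_zero] at hz2_hat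
  exact ⟨hz1_0, hz2_0, hz1_hat, hz2_hat⟩
end

section
/- For x ∈ (α,1) and z ∈ [0,α], define g(x,z) = φ_λ(x) + F^{-1}(1-x)(z-x) - φ_λ(z), the gap between the tangent line to φ_λ at x and φ_λ at z. Then ∂g/∂x (x,z) = (z-x)·d/dx[F^{-1}(1-x)] > 0 for all z ∈ [0,α], so f(x) = min_{z∈[0,α]} g(x,z) is strictly increasing in x on (α,1). -/
open Set MeasureTheory intervalIntegral Filter

/-!
Differentiating the tangent gap `g x z = φ x + φ' x (z - x) - φ z` in `x`, the two `φ' x` terms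
cancel and only `(z - x) · φ'' x` survives; for `z ≤ α < x` both factors are negative, so every
`g · z` is strictly increasing on `(α, 1)`. A minimum over `z` that is attained inherits this:
if the minimum at `b` is attained at `z`, then `f a ≤ g a z < g b z = f b`.
-/

/-- The paper's `φ_λ`, with integrand `h y = F⁻¹(1 - y)`. -/
noncomputable def phiLambda (h : ℝ → ℝ) (α lam z : ℝ) : ℝ :=
  -(∫ y in z..1, h y) + lam * ((α - z) / α) * (if z ≤ α then 1 else 0)

theorem HasDerivAt.tangentGap {φ ψ : ℝ → ℝ} {x d : ℝ} (z : ℝ)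
    (hφ : HasDerivAt φ (ψ x) x) (hψ : HasDerivAt ψ d x) :
    HasDerivAt (fun u => φ u + ψ u * (z - u) - φ z) ((z - x) * d) x := by
  have h : HasDerivAt (fun u => φ u + ψ u * (z - u) - φ z)
      (ψ x + (d * (z - x) + ψ x * (0 - 1))) x :=
    (hφ.add (hψ.mul ((hasDerivAt_const x z).sub (hasDerivAt_id x)))).sub_const (φ z)
  convert h using 1
  ring

theorem strictMonoOn_of_forall_le_of_exists_eq {α ι β : Type*} [Preorder α] [Preorder β]
    {I : Set α} {S : Set ι} {g : α → ι → β} {f : α → β}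
    (hmono : ∀ z ∈ S, StrictMonoOn (g · z) I) (hle : ∀ x ∈ I, ∀ z ∈ S, f x ≤ g x z)
    (hattained : ∀ x ∈ I, ∃ z ∈ S, g x z = f x) : StrictMonoOn f I := by
  intro a ha b hb hab
  obtain ⟨z, hz, hzb⟩ := hattained b hb
  calc f a ≤ g a z := hle a ha z hz
    _ < g b z := hmono z hz ha hb hab
    _ = f b := hzb

section phiLambda

variable {h : ℝ → ℝ} {α lam : ℝ}

theorem hasDerivAt_phiLambda (hint : IntervalIntegrable h volume 0 1)
    (hcont : ContinuousOn h (Ioo α 1)) (hα : 0 ≤ α) {x : ℝ} (hx : x ∈ Ioo α 1) :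
    HasDerivAt (phiLambda h α lam) (h x) x := by
  have hint_x : IntervalIntegrable h volume x 1 :=
    hint.mono_set (uIcc_subset_uIcc (by simp [uIcc_of_le, hα.trans hx.1.le, hx.2.le])
      right_mem_uIcc)
  have hprim : HasDerivAt (fun u => -∫ y in u..1, h y) (h x) x := by
    simpa using (integral_hasDerivAt_left hint_x (hcont.stronglyMeasurableAtFilter isOpen_Ioo x hx)
      (hcont.continuousAt (Ioo_mem_nhds hx.1 hx.2))).fun_neg
  apply hprim.congr_of_eventuallyEq
  filter_upwards [Ioi_mem_nhds hx.1] with u hu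
  simp [phiLambda, not_le.2 (mem_Ioi.1 hu)]

theorem continuousOn_phiLambda (hint : IntervalIntegrable h volume 0 1) (hα : α ≤ 1) :
    ContinuousOn (phiLambda h α lam) (Icc 0 α) := by
  have hprim : ContinuousOn (fun u => ∫ y in u..1, h y) (Icc 0 α) := by
    refine (continuousOn_primitive_interval_left (a := 0) ?_).mono ?_
    · rwa [uIcc_of_le zero_le_one, ← intervalIntegrable_iff_integrableOn_Icc_of_le zero_le_one]
    · rw [uIcc_of_le zero_le_one]
      exact Icc_subset_Icc_right hα
  refine (hprim.neg.add (by fun_prop : ContinuousOn (fun u => lam * ((α - u) / α)) _)).congr ?_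
  intro u hu
  simp [phiLambda, hu.2]

end phiLambda

theorem stmt_13_general (Finv : ℝ → ℝ) (α lam : ℝ) (hα : α ∈ Set.Ioo (0:ℝ) 1)
    (hmean : IntervalIntegrable (fun y => Finv (1 - y)) MeasureTheory.volume 0 1)
    (φ : ℝ → ℝ)
    (hφ : ∀ z, φ z = -(∫ y in z..1, Finv (1 - y))
        + lam * ((α - z) / α) * (if z ≤ α then 1 else 0))
    (d : ℝ → ℝ)
    (hd : ∀ x ∈ Set.Ioo α 1, HasDerivAt (fun x => Finv (1 - x)) (d x) x)
    (hd_neg : ∀ x ∈ Set.Ioo α 1, d x < 0)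
    (g : ℝ → ℝ → ℝ)
    (hg : ∀ x z, g x z = φ x + Finv (1 - x) * (z - x) - φ z)
    (f : ℝ → ℝ)
    (hf : ∀ x, f x = sInf ((fun z => g x z) '' Set.Icc 0 α) ∧
      ∃ z ∈ Set.Icc (0:ℝ) α, g x z = f x) :
    (∀ x ∈ Set.Ioo α 1, ∀ z ∈ Set.Icc (0:ℝ) α,
        0 < (z - x) * d x ∧ HasDerivAt (fun x => g x z) ((z - x) * d x) x) ∧
    StrictMonoOn f (Set.Ioo α 1) := by
  obtain rfl : φ = phiLambda (fun y => Finv (1 - y)) α lam := funext hφ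
  have hcont : ContinuousOn (fun y => Finv (1 - y)) (Ioo α 1) :=
    fun x hx => (hd x hx).continuousAt.continuousWithinAt
  have hderiv : ∀ x ∈ Ioo α 1, ∀ z, HasDerivAt (g · z) ((z - x) * d x) x := fun x hx z =>
    funext (hg · z) ▸ (hasDerivAt_phiLambda hmean hcont hα.1.le hx).tangentGap z (hd x hx)
  have hpos : ∀ x ∈ Ioo α 1, ∀ z ∈ Icc (0:ℝ) α, 0 < (z - x) * d x := fun x hx z hz =>
    mul_pos_of_neg_of_neg (by linarith [hz.2, hx.1]) (hd_neg x hx)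
  refine ⟨fun x hx z hz => ⟨hpos x hx z hz, hderiv x hx z⟩, ?_⟩
  refine strictMonoOn_of_forall_le_of_exists_eq (S := Icc 0 α) (fun z hz => ?_)
    (fun x _ z hz => ?_) (fun x _ => (hf x).2)
  · refine strictMonoOn_of_deriv_pos (convex_Ioo α 1)
      (fun x hx => (hderiv x hx z).continuousAt.continuousWithinAt) fun x hx => ?_
    rw [interior_Ioo] at hx
    exact (hderiv x hx z).deriv ▸ hpos x hx z hz
  · have hgx : ContinuousOn (g x ·) (Icc 0 α) :=
      funext (hg x) ▸
        (by fun_prop : Continuous fun z => _ + Finv (1 - x) * (z - x)).continuousOn.sub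
          (continuousOn_phiLambda hmean hα.2.le)
    rw [(hf x).1]
    exact csInf_le (isCompact_Icc.bddBelow_image hgx) ⟨z, hz, rfl⟩

/-- for g(x,z) = φ_λ(x) + F⁻¹(1-x)(z-x) - φ_λ(z),
∂g/∂x = (z-x)·d/dx[F⁻¹(1-x)] > 0 for z ∈ [0,α], x ∈ (α,1), so
f(x) = min_{z∈[0,α]} g(x,z) is strictly increasing on (α,1). -/
theorem stmt_13 (F Finv : ℝ → ℝ) (α lam : ℝ) (hα : α ∈ Set.Ioo (0:ℝ) 1) (hlam : 0 < lam)
    (hFcont : Continuous F) (hFmono : StrictMonoOn F (Set.Ici 0)) (hF0 : F 0 = 0)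
    (hFinv : ∀ p ∈ Set.Ioo (0:ℝ) 1, F (Finv p) = p)
    (hFinv' : ∀ x > (0:ℝ), Finv (F x) = x)
    (hmean : IntervalIntegrable (fun y => Finv (1 - y)) MeasureTheory.volume 0 1)
    (φ : ℝ → ℝ)
    (hφ : ∀ z, φ z = -(∫ y in z..1, Finv (1 - y))
        + lam * ((α - z) / α) * (if z ≤ α then 1 else 0))
    (d : ℝ → ℝ)
    (hd : ∀ x ∈ Set.Ioo α 1, HasDerivAt (fun x => Finv (1 - x)) (d x) x)
    (hd_neg : ∀ x ∈ Set.Ioo α 1, d x < 0)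
    (g : ℝ → ℝ → ℝ)
    (hg : ∀ x z, g x z = φ x + Finv (1 - x) * (z - x) - φ z)
    (f : ℝ → ℝ)
    (hf : ∀ x, f x = sInf ((fun z => g x z) '' Set.Icc 0 α) ∧
      ∃ z ∈ Set.Icc (0:ℝ) α, g x z = f x) :
    (∀ x ∈ Set.Ioo α 1, ∀ z ∈ Set.Icc (0:ℝ) α,
        0 < (z - x) * d x ∧ HasDerivAt (fun x => g x z) ((z - x) * d x) x) ∧
    StrictMonoOn f (Set.Ioo α 1) :=
  stmt_13_general Finv α lam hα hmean φ hφ d hd hd_neg g hg f hf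
end
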